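/- For every odd t ≥ 3 with t > r ≥ 1, and n ≥ 2t-1, the minimum number of copies of the star S_r over all S_t-saturated graphs on n vertices equals the minimum over 0 ≤ m ≤ t-1 of m·binom(m-1, r) + (n-m)·binom(t-1, r). -/

import Mathlib

open SimpleGraph

/-- Degree of a vertex, via `Set.ncard` (avoids decidability assumptions). -/
noncomputable def ndeg {V : Type*} (G : SimpleGraph V) (v : V) : ℕ :=
  (G.neighborSet v).ncard

/-- A graph contains a copy of the star `S_t` (with `t` edges) iff some vertex
has degree at least `t`. -/
def ContainsStar {V : Type*} (G : SimpleGraph V) (t : ℕ) : Prop :=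
  ∃ v, t ≤ ndeg G v

/-- `G` is `S_t`-saturated: it contains no copy of `S_t`, but adding any missing
edge creates one. -/
def StarSaturated {V : Type*} (G : SimpleGraph V) (t : ℕ) : Prop :=
  ¬ ContainsStar G t ∧
    ∀ u v : V, u ≠ v → ¬ G.Adj u v → ContainsStar (G ⊔ SimpleGraph.edge u v) t

/-- The number of copies of the star `S_r` in `G`: each copy corresponds to a
center `v` together with a choice of `r` of its neighbors. -/
noncomputable def starCount {V : Type*} [Fintype V] (G : SimpleGraph V) (r : ℕ) : ℕ :=
  ∑ v : V, Nat.choose (ndeg G v) r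

/-!
In an `S_t`-saturated graph the vertices of degree below `t - 1` are pairwise adjacent: the
missing edge between two of them could be added without creating a vertex of degree `t`. So they
span a clique `K_m` with `m < t`, all other vertices have degree exactly `t - 1`, and counting
stars vertex by vertex gives at least `m * C(m - 1, r) + (n - m) * C(t - 1, r)`. Conversely, for
odd `t` the union of `K_m` and the circulant graph on `ZMod (n - m)` with jumps
`±1, …, ±(t - 1) / 2`, which is `(t - 1)`-regular because `n - m ≥ t`, is `S_t`-saturated and
attains this value.
-/

namespace SimpleGraph

variable {V : Type*} {G : SimpleGraph V} {t : ℕ}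

lemma neighborSet_sup_edge_of_ne {u v w : V} (hu : w ≠ u) (hv : w ≠ v) :
    (G ⊔ edge u v).neighborSet w = G.neighborSet w := by
  ext x
  simp [edge_adj, hu, hv]

lemma neighborSet_sup_edge_left {u v : V} (huv : u ≠ v) :
    (G ⊔ edge u v).neighborSet u = insert v (G.neighborSet u) := by
  ext x
  simp only [mem_neighborSet, sup_adj, edge_adj, Set.mem_insert_iff]
  grind

lemma ndeg_sup_edge_of_ne {u v w : V} (hu : w ≠ u) (hv : w ≠ v) :
    ndeg (G ⊔ edge u v) w = ndeg G w := by
  rw [ndeg, neighborSet_sup_edge_of_ne hu hv, ndeg]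

section Finite

variable [Finite V]

lemma ndeg_sup_edge_left {u v : V} (huv : u ≠ v) (hadj : ¬ G.Adj u v) :
    ndeg (G ⊔ edge u v) u = ndeg G u + 1 := by
  rw [ndeg, neighborSet_sup_edge_left huv,
    Set.ncard_insert_of_notMem (show v ∉ G.neighborSet u from hadj), ndeg]

lemma ndeg_sup_edge_right {u v : V} (huv : u ≠ v) (hadj : ¬ G.Adj u v) :
    ndeg (G ⊔ edge u v) v = ndeg G v + 1 := by
  rw [edge_comm]
  exact ndeg_sup_edge_left huv.symm fun h ↦ hadj h.symm

lemma starSaturated_iff :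
    StarSaturated G t ↔ (∀ v, ndeg G v < t) ∧
      ∀ u v, u ≠ v → ¬ G.Adj u v → ndeg G u + 1 = t ∨ ndeg G v + 1 = t := by
  simp only [StarSaturated, ContainsStar, not_exists, not_le]
  refine and_congr_right fun hlt ↦ forall₄_congr fun u v huv hadj ↦ ?_
  have hu := ndeg_sup_edge_left huv hadj
  have hv := ndeg_sup_edge_right huv hadj
  constructor
  · rintro ⟨w, hw⟩
    by_cases hwu : w = u
    · subst hwu; have := hlt w; omega
    by_cases hwv : w = v
    · subst hwv; have := hlt w; omega
    rw [ndeg_sup_edge_of_ne hwu hwv] at hw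
    exact absurd hw (hlt w).not_ge
  · rintro (h | h)
    · exact ⟨u, by omega⟩
    · exact ⟨v, by omega⟩

end Finite

lemma IsClique.card_sub_one_le_ndeg [Finite V] {s : Finset V} (hs : G.IsClique (s : Set V))
    {v : V} (hv : v ∈ s) : s.card - 1 ≤ ndeg G v := by
  classical
  have hsub : (s.erase v : Set V) ⊆ G.neighborSet v := fun w hw ↦
    hs hv (Finset.mem_of_mem_erase hw) (Finset.ne_of_mem_erase hw).symm
  have := Set.ncard_le_ncard hsub
  rwa [Set.ncard_coe_finset, Finset.card_erase_of_mem hv] at this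

lemma StarSaturated.isClique_ndeg_add_one_lt [Finite V] (h : StarSaturated G t) :
    G.IsClique {v | ndeg G v + 1 < t} := by
  intro u hu v hv huv
  by_contra hadj
  have hu : ndeg G u + 1 < t := hu
  have hv : ndeg G v + 1 < t := hv
  have := (starSaturated_iff.1 h).2 u v huv hadj
  omega

lemma StarSaturated.exists_starCount_ge [Fintype V] (h : StarSaturated G t) (ht : 0 < t)
    (r : ℕ) : ∃ m < t,
      m * (m - 1).choose r + (Fintype.card V - m) * (t - 1).choose r ≤ starCount G r := by
  classical
  have hlt := (starSaturated_iff.1 h).1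
  set A : Finset V := {v | ndeg G v + 1 < t}
  have hA : G.IsClique (A : Set V) := by simpa [A] using h.isClique_ndeg_add_one_lt
  have hdegA : ∀ v ∈ A, A.card - 1 ≤ ndeg G v := fun v hv ↦ hA.card_sub_one_le_ndeg hv
  have hdeg_compl : ∀ v ∉ A, ndeg G v = t - 1 := fun v hv ↦ by
    have := hlt v
    simp only [A, Finset.mem_filter, Finset.mem_univ, true_and] at hv
    omega
  refine ⟨A.card, ?_, ?_⟩
  · obtain hA0 | ⟨v, hv⟩ := A.eq_empty_or_nonempty
    · simpa [hA0] using ht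
    · have := hdegA v hv
      have : ndeg G v + 1 < t := by simpa [A] using hv
      omega
  · have hcompl : ∑ v ∈ Aᶜ, (ndeg G v).choose r = Aᶜ.card * (t - 1).choose r := by
      rw [Finset.sum_congr rfl fun v hv ↦ by rw [hdeg_compl v (Finset.mem_compl.1 hv)],
        Finset.sum_const, smul_eq_mul]
    rw [starCount, ← Finset.sum_add_sum_compl A, hcompl, Finset.card_compl]
    gcongr
    calc A.card * (A.card - 1).choose r = ∑ _v ∈ A, (A.card - 1).choose r := by simp
      _ ≤ ∑ v ∈ A, (ndeg G v).choose r :=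
        Finset.sum_le_sum fun v hv ↦ Nat.choose_le_choose r (hdegA v hv)

end SimpleGraph

def centeredJumps (N k : ℕ) : Set (ZMod N) :=
  (Int.cast : ℤ → ZMod N) '' (Set.Icc (-k : ℤ) k \ {0})

section centeredJumps

variable {N k : ℕ}

lemma intCast_injOn_Icc (hk : 2 * k < N) :
    Set.InjOn (Int.cast : ℤ → ZMod N) (Set.Icc (-k : ℤ) k) := by
  intro a ha b hb hab
  simp only [Set.mem_Icc] at ha hb
  rw [ZMod.intCast_eq_intCast_iff_dvd_sub] at hab
  have := Int.eq_zero_of_abs_lt_dvd hab (by rw [abs_lt]; constructor <;> omega)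
  omega

lemma neg_centeredJumps : -centeredJumps N k = centeredJumps N k := by
  ext x
  simp only [centeredJumps, Set.mem_neg, Set.mem_image, Set.mem_sdiff, Set.mem_Icc,
    Set.mem_singleton_iff]
  constructor
  · rintro ⟨i, hi, hx⟩
    exact ⟨-i, by omega, by rw [Int.cast_neg, hx, neg_neg]⟩
  · rintro ⟨i, hi, rfl⟩
    exact ⟨-i, by omega, Int.cast_neg i⟩

lemma zero_notMem_centeredJumps (hk : 2 * k < N) : (0 : ZMod N) ∉ centeredJumps N k := by
  rintro ⟨i, ⟨hi, hi0⟩, h⟩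
  exact hi0 (intCast_injOn_Icc hk hi (by simp) (by simpa using h))

lemma ncard_centeredJumps (hk : 2 * k < N) : (centeredJumps N k).ncard = 2 * k := by
  rw [centeredJumps, ((intCast_injOn_Icc hk).mono Set.sdiff_subset).ncard_image,
    Set.ncard_sdiff_singleton_of_mem (by simp), ← Finset.coe_Icc, Set.ncard_coe_finset,
    Int.card_Icc]
  omega

end centeredJumps

namespace SimpleGraph

variable {V W : Type*} {G : SimpleGraph V} {H : SimpleGraph W} {t : ℕ}

lemma neighborSet_circulantGraph {A : Type*} [AddGroup A] {s : Set A} (hs : -s = s)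
    (hs0 : 0 ∉ s) (v : A) : (circulantGraph s).neighborSet v = (· + v) '' s := by
  ext w
  simp only [mem_neighborSet, circulantGraph_adj, Set.mem_image]
  constructor
  · rintro ⟨-, h | h⟩
    · refine ⟨w - v, ?_, sub_add_cancel w v⟩
      rw [← hs, Set.mem_neg, neg_sub]
      exact h
    · exact ⟨w - v, h, sub_add_cancel w v⟩
  · rintro ⟨x, hx, rfl⟩
    refine ⟨fun h ↦ hs0 ?_, Or.inr (by simpa using hx)⟩
    have hx0 : x = 0 := by simpa using h.symm
    rwa [hx0] at hx

lemma ndeg_circulantGraph {A : Type*} [AddGroup A] {s : Set A} (hs : -s = s) (hs0 : 0 ∉ s)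
    (v : A) : ndeg (circulantGraph s) v = s.ncard := by
  rw [ndeg, neighborSet_circulantGraph hs hs0,
    Set.ncard_image_of_injective _ (add_left_injective v)]

lemma ndeg_circulantGraph_centeredJumps {N k : ℕ} (hk : 2 * k < N) (v : ZMod N) :
    ndeg (circulantGraph (centeredJumps N k)) v = 2 * k := by
  rw [ndeg_circulantGraph neg_centeredJumps (zero_notMem_centeredJumps hk),
    ncard_centeredJumps hk]

lemma ndeg_top [Finite V] (v : V) : ndeg (⊤ : SimpleGraph V) v = Nat.card V - 1 := by
  rw [ndeg, neighborSet_top, Set.ncard_compl, Set.ncard_singleton]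

lemma ndeg_sum_inl (v : V) : ndeg (G ⊕g H) (.inl v) = ndeg G v := by
  rw [ndeg, neighborSet_sum_inl, Set.ncard_image_of_injective _ Sum.inl_injective, ndeg]

lemma ndeg_sum_inr (w : W) : ndeg (G ⊕g H) (.inr w) = ndeg H w := by
  rw [ndeg, neighborSet_sum_inr, Set.ncard_image_of_injective _ Sum.inr_injective, ndeg]

lemma Iso.ndeg_eq (e : G ≃g H) (v : V) : ndeg H (e v) = ndeg G v := by
  rw [ndeg, ← e.image_neighborSet, Set.ncard_image_of_injective _ e.injective, ndeg]

lemma Iso.starSaturated [Finite V] [Finite W] (e : G ≃g H) (h : StarSaturated G t) :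
    StarSaturated H t := by
  rw [starSaturated_iff] at h ⊢
  refine ⟨fun w ↦ e.symm.ndeg_eq w ▸ h.1 (e.symm w), fun u v huv hadj ↦ ?_⟩
  rw [← e.symm.ndeg_eq u, ← e.symm.ndeg_eq v]
  exact h.2 _ _ (e.symm.injective.ne huv) (e.symm.map_adj_iff.not.2 hadj)

lemma starSaturated_top_sum [Finite V] [Finite W] (hV : Nat.card V ≤ t)
    (hH : ∀ w, ndeg H w + 1 = t) : StarSaturated ((⊤ : SimpleGraph V) ⊕g H) t := by
  rw [starSaturated_iff]
  refine ⟨?_, ?_⟩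
  · rintro (v | w)
    · have : 0 < Nat.card V := Nat.card_pos_iff.2 ⟨⟨v⟩, inferInstance⟩
      rw [ndeg_sum_inl, ndeg_top]
      omega
    · have := hH w
      rw [ndeg_sum_inr]
      omega
  · rintro (a | a) (b | b) hne hadj
    · exact absurd (by simpa using hne) hadj
    all_goals simp [ndeg_sum_inr, hH]

lemma starCount_eq_of_ndeg_eq [Fintype V] {d : ℕ} (h : ∀ v, ndeg G v = d) (r : ℕ) :
    starCount G r = Fintype.card V * d.choose r := by
  simp [starCount, h]

lemma starCount_sum [Fintype V] [Fintype W] (r : ℕ) :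
    starCount (G ⊕g H) r = starCount G r + starCount H r := by
  simp [starCount, Fintype.sum_sum_type, ndeg_sum_inl, ndeg_sum_inr]

lemma Iso.starCount_eq [Fintype V] [Fintype W] (e : G ≃g H) (r : ℕ) :
    starCount H r = starCount G r :=
  (Fintype.sum_equiv e.toEquiv _ _ fun v ↦ congrArg (·.choose r) (e.ndeg_eq v).symm).symm

lemma exists_starSaturated_starCount_eq [Fintype V] {m : ℕ} (hodd : Odd t) (hm : m ≤ t)
    (hV : m + t ≤ Fintype.card V) (r : ℕ) :
    ∃ G : SimpleGraph V, StarSaturated G t ∧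
      starCount G r = m * (m - 1).choose r + (Fintype.card V - m) * (t - 1).choose r := by
  obtain ⟨k, rfl⟩ := hodd
  set N := Fintype.card V - m
  have hk : 2 * k < N := by omega
  have : NeZero N := ⟨by omega⟩
  set H := circulantGraph (centeredJumps N k)
  have hH : ∀ w, ndeg H w = 2 * k := ndeg_circulantGraph_centeredJumps hk
  set K := (⊤ : SimpleGraph (Fin m)) ⊕g H
  have hsat : StarSaturated K (2 * k + 1) :=
    starSaturated_top_sum (by simpa using hm) fun w ↦ by rw [hH]
  let e : Fin m ⊕ ZMod N ≃ V := Fintype.equivOfCardEq (by simp [ZMod.card, N]; omega)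
  refine ⟨K.map e, (Iso.map e K).starSaturated hsat, ?_⟩
  rw [(Iso.map e K).starCount_eq, starCount_sum, starCount_eq_of_ndeg_eq hH,
    starCount_eq_of_ndeg_eq fun v ↦ ndeg_top v]
  simp [ZMod.card]

end SimpleGraph

theorem stmt16 (t r n : ℕ) (ht : 3 ≤ t) (hodd : Odd t) (hn : 2 * t - 1 ≤ n) :
    IsLeast {N : ℕ | ∃ G : SimpleGraph (Fin n), StarSaturated G t ∧ N = starCount G r}
      ((Finset.range t).inf' (Finset.nonempty_range_iff.mpr (by omega))
        (fun m => m * Nat.choose (m - 1) r + (n - m) * Nat.choose (t - 1) r)) := by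
  constructor
  · obtain ⟨m, hm, hmin⟩ :=
      Finset.exists_mem_eq_inf' (Finset.nonempty_range_iff.mpr (show t ≠ 0 by omega))
        fun m ↦ m * Nat.choose (m - 1) r + (n - m) * Nat.choose (t - 1) r
    rw [Finset.mem_range] at hm
    obtain ⟨G, hsat, hcount⟩ := exists_starSaturated_starCount_eq (V := Fin n) hodd hm.le
      (by rw [Fintype.card_fin]; omega) r
    exact ⟨G, hsat, by rw [hmin, hcount, Fintype.card_fin]⟩
  · rintro _ ⟨G, hsat, rfl⟩
    obtain ⟨m, hm, hle⟩ := hsat.exists_starCount_ge (by omega) r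
    rw [Fintype.card_fin] at hle
    exact (Finset.inf'_le _ (Finset.mem_range.2 hm)).trans hle
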